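/- Let k be a field and A a finite-dimensional commutative k-algebra, and let e ∈ A be an idempotent. If (A, Ae) is a cover of eAe (i.e. of End_A(Ae)^op, which is canonically isomorphic to eAe), then A is isomorphic to eAe as a k-algebra. -/

import Mathlib

/-!
Over a commutative ring an `A`-linear map `Ae → A(1 - e)` is determined by the image of `e`,
which lies in `eA(1 - e) = 0`. So the Schur functor `Hom_A(Ae, -)` kills `A(1 - e)`, and
faithfulness on the projective `A(1 - e)` forces `A(1 - e) = 0`, i.e. `e = 1` and `eAe = A`.
-/

universe u

open MulOpposite

set_option synthInstance.maxHeartbeats 400000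
set_option maxHeartbeats 1000000

/-- `(A, P)` is a cover of `B = End_A(P)ᵒᵖ`: the Schur functor `Hom_A(P, -)` is fully
faithful on finitely generated projective `A`-modules.  Here a map
`Φ : Hom_A(P, M) → Hom_A(P, N)` is `B`-linear iff it is additive and commutes with
precomposition by every `A`-endomorphism of `P`, so the condition says that for all
finitely generated projective `M`, `N` the natural map
`Hom_A(M, N) → Hom_B(Hom_A(P, M), Hom_A(P, N))`, `g ↦ (f ↦ g ∘ f)`, is bijective. -/
def IsCover (A : Type u) [Ring A] (P : Type u) [AddCommGroup P] [Module A P] : Prop :=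
  ∀ (M N : Type u) [AddCommGroup M] [Module A M] [AddCommGroup N] [Module A N],
    Module.Finite A M → Module.Projective A M →
    Module.Finite A N → Module.Projective A N →
    (Function.Injective fun (g : M →ₗ[A] N) => fun f : P →ₗ[A] M => g ∘ₗ f) ∧
    (∀ Φ : (P →ₗ[A] M) → (P →ₗ[A] N),
      (∀ f₁ f₂, Φ (f₁ + f₂) = Φ f₁ + Φ f₂) →
      (∀ (f : P →ₗ[A] M) (g : P →ₗ[A] P), Φ (f ∘ₗ g) = Φ f ∘ₗ g) →
      ∃ g : M →ₗ[A] N, ∀ f, Φ f = g ∘ₗ f)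

/-- `Ae` as a left `A`-submodule of `A` (for an idempotent `e` this is the projective
left module `Ae`, realized as `{x : A | x * e = x}`). -/
def AeSub (A : Type u) [Ring A] (e : A) : Submodule A A where
  carrier := {x | x * e = x}
  add_mem' := by
    intro a b ha hb
    simp only [Set.mem_setOf_eq] at *
    rw [add_mul, ha, hb]
  zero_mem' := by simp
  smul_mem' := by
    intro c x hx
    simp only [Set.mem_setOf_eq, smul_eq_mul] at *
    rw [mul_assoc, hx]

/-- The additive subgroup `eAe` of `A`, for an idempotent `e`. -/
def cornerAddSubgroup (A : Type u) [Ring A] (e : {x : A // x * x = x}) : AddSubgroup A where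
  carrier := {x | e.1 * x * e.1 = x}
  add_mem' := by
    intro a b ha hb
    simp only [Set.mem_setOf_eq] at *
    rw [mul_add, add_mul, ha, hb]
  zero_mem' := by simp
  neg_mem' := by
    intro x hx
    simp only [Set.mem_setOf_eq] at *
    rw [mul_neg, neg_mul, hx]

/-- The corner ring `eAe` of `A` at an idempotent `e`; its multiplicative identity is `e`. -/
def Corner (A : Type u) [Ring A] (e : {x : A // x * x = x}) : Type u :=
  ↥(cornerAddSubgroup A e)

namespace Corner
variable {A : Type u} [Ring A] (e : {x : A // x * x = x})

lemma eq_self (x : Corner A e) : e.1 * x.1 * e.1 = x.1 := x.2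

lemma e_mul (x : Corner A e) : e.1 * x.1 = x.1 := by
  conv_lhs => rw [← eq_self e x]
  rw [← mul_assoc, ← mul_assoc, e.2, eq_self e x]

lemma mul_e (x : Corner A e) : x.1 * e.1 = x.1 := by
  conv_lhs => rw [← eq_self e x]
  rw [mul_assoc, e.2, eq_self e x]

instance : AddCommGroup (Corner A e) :=
  inferInstanceAs (AddCommGroup ↥(cornerAddSubgroup A e))

instance : Mul (Corner A e) :=
  ⟨fun x y => ⟨x.1 * y.1, by
    show e.1 * (x.1 * y.1) * e.1 = x.1 * y.1
    rw [mul_assoc, mul_assoc, mul_e e y, ← mul_assoc, e_mul e x]⟩⟩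

instance : One (Corner A e) := ⟨⟨e.1, by show e.1 * e.1 * e.1 = e.1; rw [e.2, e.2]⟩⟩

/-- `eAe` is a ring with identity `e`. -/
instance : Ring (Corner A e) :=
  { (inferInstanceAs (AddCommGroup (Corner A e)) : AddCommGroup (Corner A e)) with
    mul := (· * ·)
    one := 1
    mul_assoc := fun x y z => Subtype.ext (mul_assoc x.1 y.1 z.1)
    one_mul := fun x => Subtype.ext (e_mul e x)
    mul_one := fun x => Subtype.ext (mul_e e x)
    left_distrib := fun x y z => Subtype.ext (mul_add x.1 y.1 z.1)
    right_distrib := fun x y z => Subtype.ext (add_mul x.1 y.1 z.1)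
    zero_mul := fun x => Subtype.ext (zero_mul x.1)
    mul_zero := fun x => Subtype.ext (mul_zero x.1) }

end Corner

section
variable (k : Type u) [Field k] (A : Type u) [CommRing A] [Algebra k A]

instance (e : {x : A // x * x = x}) : SMul k (Corner A e) :=
  ⟨fun c x => ⟨c • x.1, by
    show e.1 * (c • x.1) * e.1 = c • x.1
    rw [mul_smul_comm, smul_mul_assoc, x.2]⟩⟩

end

namespace AeSub

section Ring

variable {A : Type u} [Ring A] {e : A}

def proj (he : IsIdempotentElem e) : A →ₗ[A] AeSub A e where
  toFun a := ⟨a * e, show a * e * e = a * e by rw [mul_assoc, he.eq]⟩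
  map_add' a b := Subtype.ext (add_mul a b e)
  map_smul' c a := Subtype.ext (mul_assoc c a e)

lemma moduleFinite (he : IsIdempotentElem e) : Module.Finite A (AeSub A e) :=
  Module.Finite.of_surjective (proj he) fun x => ⟨x, Subtype.ext x.2⟩

lemma moduleProjective (he : IsIdempotentElem e) : Module.Projective A (AeSub A e) :=
  Module.Projective.of_split (AeSub A e).subtype (proj he)
    (LinearMap.ext fun x => Subtype.ext x.2)

lemma eq_smul_mk (he : IsIdempotentElem e) (x : AeSub A e) :
    x = (x : A) • (⟨e, he.eq⟩ : AeSub A e) :=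
  Subtype.ext x.2.symm

lemma linearMap_ext (he : IsIdempotentElem e) {M : Type*} [AddCommGroup M] [Module A M]
    {f g : AeSub A e →ₗ[A] M} (h : f ⟨e, he.eq⟩ = g ⟨e, he.eq⟩) : f = g :=
  LinearMap.ext fun x => by rw [eq_smul_mk he x, f.map_smul, g.map_smul, h]

end Ring

lemma linearMap_eq_zero {A : Type u} [CommRing A] {e e' : A} (he : IsIdempotentElem e)
    (hee' : e * e' = 0) (f : AeSub A e →ₗ[A] AeSub A e') : f = 0 := by
  refine linearMap_ext he (Subtype.ext ?_)
  set y := f ⟨e, he.eq⟩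
  have hy : e * (y : A) = y := by
    rw [← smul_eq_mul, ← Submodule.coe_smul, ← f.map_smul]
    exact congr_arg _ (congr_arg f (Subtype.ext he.eq))
  calc (y : A) = e * (y * e') := by rw [y.2, hy]
    _ = y * (e * e') := by ring
    _ = 0 := by rw [hee', mul_zero]

end AeSub

lemma IsCover.subsingleton_of_forall_eq_zero {A P M : Type u} [Ring A] [AddCommGroup P]
    [Module A P] (hcover : IsCover A P) [AddCommGroup M] [Module A M]
    [Module.Finite A M] [Module.Projective A M] (hP : ∀ f : P →ₗ[A] M, f = 0) :
    Subsingleton M := by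
  have hid : (LinearMap.id : M →ₗ[A] M) = 0 :=
    (hcover M M ‹_› ‹_› ‹_› ‹_›).1 (funext fun f => by simp only [hP f, LinearMap.comp_zero])
  exact ⟨fun x y => by simpa using congr($hid x).trans congr($hid y).symm⟩

lemma eq_one_of_isCover_aeSub {A : Type u} [CommRing A] {e : A} (he : IsIdempotentElem e)
    (hcover : IsCover A (AeSub A e)) : e = 1 := by
  have hf := he.one_sub
  have := AeSub.moduleFinite hf
  have := AeSub.moduleProjective hf
  have : Subsingleton (AeSub A (1 - e)) :=
    hcover.subsingleton_of_forall_eq_zero (AeSub.linearMap_eq_zero he he.mul_one_sub_self)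
  have h0 : (⟨1 - e, hf.eq⟩ : AeSub A (1 - e)) = 0 := Subsingleton.elim _ _
  exact (sub_eq_zero.mp (congr_arg Subtype.val h0)).symm

def Corner.oneRingEquiv (A : Type u) [Ring A] (h : (1 : A) * 1 = 1) : A ≃+* Corner A ⟨1, h⟩ where
  toFun a := ⟨a, show 1 * a * 1 = a by rw [one_mul, mul_one]⟩
  invFun x := x.1
  left_inv _ := rfl
  right_inv _ := rfl
  map_mul' _ _ := rfl
  map_add' _ _ := rfl

section
variable (k : Type u) [Field k] (A : Type u) [CommRing A] [Algebra k A]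

theorem commutative_cover_iso
    (e : A) (he : e * e = e)
    (hcover : IsCover A ↥(AeSub A e)) :
    ∃ φ : A ≃+* Corner A ⟨e, he⟩, ∀ (c : k) (a : A), φ (c • a) = c • φ a := by
  obtain rfl := eq_one_of_isCover_aeSub he hcover
  exact ⟨Corner.oneRingEquiv A he, fun _ _ => rfl⟩

end
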